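/- Let $U$ and $V$ be two $N$-dimensional random vectors with probability density functions $f_U$ and $f_V$ that are nonzero almost everywhere. Then the total variation distance satisfies $d_{TV}(U,V) = \int_0^1 \mathbb{P}\left(\frac{f_U(V)}{f_V(V)} < x\right) dx$. -/

import Mathlib

open MeasureTheory
open scoped ENNReal

/-- Total variation distance between the laws of two random variables. -/
noncomputable def dTV {Ω E : Type*} [MeasurableSpace Ω] [MeasurableSpace E]
    (μ : Measure Ω) (U V : Ω → E) : ℝ :=
  ⨆ A : {s : Set E // MeasurableSet s},
    |(μ (U ⁻¹' A.1)).toReal - (μ (V ⁻¹' A.1)).toReal|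

/-!
For probability densities `p, q`, the supremum of `|P(A) - Q(A)|` is attained at
`A = {p < q}` and equals `∫ (q - p)⁺ = ∫ (p - q)⁺`. On the other side, Fubini turns
`∫₀¹ Q(p/q < t) dt` into `∫ q · |{t ∈ (0,1] : p/q < t}| = ∫ q (1 - p/q)⁺ = ∫ (q - p)⁺`.
-/

section Densities

variable {E : Type*} [MeasurableSpace E] {ν : Measure E} {p q : E → ℝ≥0∞}

lemma lintegral_tsub_comm (hp : Measurable p) (hq : Measurable q)
    (hpq : ∫⁻ x, p x ∂ν = ∫⁻ x, q x ∂ν) (hq_fin : ∫⁻ x, q x ∂ν ≠ ∞) :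
    ∫⁻ x, p x - q x ∂ν = ∫⁻ x, q x - p x ∂ν := by
  have hmax : ∫⁻ x, q x + (p x - q x) ∂ν = ∫⁻ x, p x + (q x - p x) ∂ν := by
    simp only [add_tsub_eq_max, max_comm]
  rwa [lintegral_add_left hq, lintegral_add_left hp, hpq,
    ENNReal.add_right_inj hq_fin] at hmax

lemma toReal_setLIntegral_sub_le (hq : Measurable q) (A : Set E)
    (hqA : ∫⁻ x in A, q x ∂ν ≠ ∞) (hpq : ∫⁻ x, p x - q x ∂ν ≠ ∞) :
    (∫⁻ x in A, p x ∂ν).toReal - (∫⁻ x in A, q x ∂ν).toReal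
      ≤ (∫⁻ x, p x - q x ∂ν).toReal := by
  have hle : ∫⁻ x in A, p x ∂ν ≤ ∫⁻ x in A, q x ∂ν + ∫⁻ x, p x - q x ∂ν :=
    calc ∫⁻ x in A, p x ∂ν ≤ ∫⁻ x in A, q x + (p x - q x) ∂ν :=
          lintegral_mono fun _ => le_add_tsub
      _ = ∫⁻ x in A, q x ∂ν + ∫⁻ x in A, p x - q x ∂ν := lintegral_add_left hq _
      _ ≤ ∫⁻ x in A, q x ∂ν + ∫⁻ x, p x - q x ∂ν :=
          add_le_add le_rfl (setLIntegral_le_lintegral _ _)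
  rw [sub_le_iff_le_add', ← ENNReal.toReal_add hqA hpq]
  exact ENNReal.toReal_mono (ENNReal.add_ne_top.2 ⟨hqA, hpq⟩) hle

lemma setLIntegral_lt_add_lintegral_tsub (hp : Measurable p) (hq : Measurable q) :
    ∫⁻ x in {x | p x < q x}, q x ∂ν =
      ∫⁻ x in {x | p x < q x}, p x ∂ν + ∫⁻ x, q x - p x ∂ν := by
  have hA : MeasurableSet {x | p x < q x} := measurableSet_lt hp hq
  rw [← setLIntegral_eq_of_support_subset (s := {x | p x < q x})
      (fun x hx => tsub_pos_iff_lt.1 (pos_iff_ne_zero.2 hx)),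
    ← lintegral_add_left hp]
  exact setLIntegral_congr_fun hA fun x hx => (add_tsub_cancel_of_le hx.le).symm

theorem iSup_abs_toReal_withDensity_sub (hp : Measurable p) (hq : Measurable q)
    (hpq : ∫⁻ x, p x ∂ν = ∫⁻ x, q x ∂ν) (hq_fin : ∫⁻ x, q x ∂ν ≠ ∞) :
    ⨆ A : {s : Set E // MeasurableSet s},
      |(ν.withDensity p A.1).toReal - (ν.withDensity q A.1).toReal|
      = (∫⁻ x, q x - p x ∂ν).toReal := by
  have hp_fin : ∫⁻ x, p x ∂ν ≠ ∞ := hpq ▸ hq_fin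
  have hcomm := lintegral_tsub_comm hp hq hpq hq_fin
  have hfinA : ∀ {r : E → ℝ≥0∞}, ∫⁻ x, r x ∂ν ≠ ∞ → ∀ A, ∫⁻ x in A, r x ∂ν ≠ ∞ :=
    fun h A => ne_top_of_le_ne_top h (setLIntegral_le_lintegral A _)
  have hD_fin : ∫⁻ x, q x - p x ∂ν ≠ ∞ :=
    ne_top_of_le_ne_top hq_fin (lintegral_mono fun _ => tsub_le_self)
  have hbound : ∀ A : {s : Set E // MeasurableSet s},
      |(ν.withDensity p A.1).toReal - (ν.withDensity q A.1).toReal|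
        ≤ (∫⁻ x, q x - p x ∂ν).toReal := by
    rintro ⟨A, hA⟩
    rw [withDensity_apply _ hA, withDensity_apply _ hA, abs_sub_le_iff]
    constructor
    · rw [← hcomm]
      exact toReal_setLIntegral_sub_le hq A (hfinA hq_fin A) (hcomm ▸ hD_fin)
    · exact toReal_setLIntegral_sub_le hp A (hfinA hp_fin A) hD_fin
  refine le_antisymm (ciSup_le hbound) (le_ciSup_of_le ⟨_, Set.forall_mem_range.2 hbound⟩
    ⟨{x | p x < q x}, measurableSet_lt hp hq⟩ ?_)
  rw [withDensity_apply _ (measurableSet_lt hp hq),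
    withDensity_apply _ (measurableSet_lt hp hq), setLIntegral_lt_add_lintegral_tsub hp hq,
    ENNReal.toReal_add (hfinA hp_fin _) hD_fin]
  simp

end Densities

lemma lintegral_Ioc_indicator_Ioi_div (a b : ℝ) :
    ∫⁻ t in Set.Ioc (0:ℝ) 1, (Set.Ioi (a / b)).indicator (fun _ => ENNReal.ofReal b) t
      = ENNReal.ofReal b - ENNReal.ofReal a := by
  rw [lintegral_indicator_const measurableSet_Ioi,
    Measure.restrict_apply measurableSet_Ioi, Set.inter_comm, Set.Ioc_inter_Ioi,
    Real.volume_Ioc, sup_comm]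
  rcases le_or_gt b 0 with hb | hb
  · rw [ENNReal.ofReal_of_nonpos hb, zero_mul, zero_tsub]
  · have hmax : max (a / b) 0 = max a 0 / b := by rw [← max_div_div_right hb.le, zero_div]
    rw [hmax, ← ENNReal.ofReal_mul hb.le, mul_sub, mul_one, mul_div_cancel₀ _ hb.ne',
      ENNReal.ofReal_sub _ (le_max_right a 0)]
    rcases le_total a 0 with ha | ha
    · rw [max_eq_right ha, ENNReal.ofReal_zero, ENNReal.ofReal_of_nonpos ha]
    · rw [max_eq_left ha]

section LayerCake

variable {E : Type*} [MeasurableSpace E] {ν : Measure E} [SFinite ν] {f g : E → ℝ}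

theorem lintegral_Ioc_withDensity_div_lt (hf : Measurable f) (hg : Measurable g) :
    ∫⁻ t in Set.Ioc (0:ℝ) 1, ν.withDensity (fun y => ENNReal.ofReal (g y)) {y | f y / g y < t}
      = ∫⁻ y, ENNReal.ofReal (g y) - ENNReal.ofReal (f y) ∂ν := by
  have hS (t : ℝ) : MeasurableSet {y | f y / g y < t} :=
    measurableSet_lt (hf.div hg) measurable_const
  have hmeas : Measurable fun z : ℝ × E =>
      (Set.Ioi (f z.2 / g z.2)).indicator (fun _ => ENNReal.ofReal (g z.2)) z.1 :=
    Measurable.indicator (s := {z : ℝ × E | f z.2 / g z.2 < z.1})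
      (hg.comp measurable_snd).ennreal_ofReal
      (measurableSet_lt ((hf.div hg).comp measurable_snd) measurable_fst)
  calc _ = ∫⁻ t in Set.Ioc (0:ℝ) 1, ∫⁻ y,
        (Set.Ioi (f y / g y)).indicator (fun _ => ENNReal.ofReal (g y)) t ∂ν := by
        refine lintegral_congr fun t => ?_
        rw [withDensity_apply _ (hS t), ← lintegral_indicator (hS t)]
        rfl
    _ = ∫⁻ y, (∫⁻ t in Set.Ioc (0:ℝ) 1,
        (Set.Ioi (f y / g y)).indicator (fun _ => ENNReal.ofReal (g y)) t) ∂ν :=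
      lintegral_lintegral_swap hmeas.aemeasurable
    _ = _ := lintegral_congr fun y => lintegral_Ioc_indicator_Ioi_div (f y) (g y)

end LayerCake

lemma lintegral_eq_one_of_map_eq_withDensity {Ω E : Type*} [MeasurableSpace Ω]
    [MeasurableSpace E] {μ : Measure Ω} [IsProbabilityMeasure μ] {ν : Measure E} {W : Ω → E}
    {p : E → ℝ≥0∞}
    (hW : AEMeasurable W μ) (h : μ.map W = ν.withDensity p) : ∫⁻ x, p x ∂ν = 1 := by
  have := (Measure.isProbabilityMeasure_map (μ := μ) hW).measure_univ
  rwa [h, withDensity_apply _ MeasurableSet.univ, Measure.restrict_univ] at this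

lemma dTV_eq_iSup_map {Ω E : Type*} [MeasurableSpace Ω] [MeasurableSpace E]
    {μ : Measure Ω} {U V : Ω → E} (hU : Measurable U) (hV : Measurable V) :
    dTV μ U V = ⨆ A : {s : Set E // MeasurableSet s},
      |(μ.map U A.1).toReal - (μ.map V A.1).toReal| := by
  simp only [dTV, Measure.map_apply hU, Measure.map_apply hV, Subtype.prop]

theorem stmt0_general {Ω : Type*} [MeasurableSpace Ω] (μ : Measure Ω) [IsProbabilityMeasure μ]
    {N : ℕ} (U V : Ω → (Fin N → ℝ)) (hU : Measurable U) (hV : Measurable V)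
    (fU fV : (Fin N → ℝ) → ℝ) (hfU : Measurable fU) (hfV : Measurable fV)
    (hUd : Measure.map U μ = volume.withDensity (fun x => ENNReal.ofReal (fU x)))
    (hVd : Measure.map V μ = volume.withDensity (fun x => ENNReal.ofReal (fV x))) :
    dTV μ U V
      = ∫ x in Set.Ioc (0:ℝ) 1, (μ {ω | fU (V ω) / fV (V ω) < x}).toReal := by
  have hmassU := lintegral_eq_one_of_map_eq_withDensity hU.aemeasurable hUd
  have hmassV := lintegral_eq_one_of_map_eq_withDensity hV.aemeasurable hVd
  have hlevel (t : ℝ) : μ {ω | fU (V ω) / fV (V ω) < t}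
      = volume.withDensity (fun x => ENNReal.ofReal (fV x)) {y | fU y / fV y < t} := by
    rw [← hVd, Measure.map_apply hV (s := {y | fU y / fV y < t})
      (measurableSet_lt (hfU.div hfV) measurable_const)]
    rfl
  have hmono : Monotone fun t : ℝ => μ {ω | fU (V ω) / fV (V ω) < t} :=
    fun _ _ hst => measure_mono fun _ h => lt_of_lt_of_le h hst
  rw [dTV_eq_iSup_map hU hV, hUd, hVd, iSup_abs_toReal_withDensity_sub hfU.ennreal_ofReal
      hfV.ennreal_ofReal (hmassU.trans hmassV.symm) (hmassV ▸ ENNReal.one_ne_top),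
    integral_toReal hmono.measurable.aemeasurable (ae_of_all _ fun _ => measure_lt_top μ _)]
  simp_rw [hlevel]
  rw [lintegral_Ioc_withDensity_div_lt hfU hfV]

theorem stmt0 {Ω : Type*} [MeasurableSpace Ω] (μ : Measure Ω) [IsProbabilityMeasure μ]
    {N : ℕ} (U V : Ω → (Fin N → ℝ)) (hU : Measurable U) (hV : Measurable V)
    (fU fV : (Fin N → ℝ) → ℝ) (hfU : Measurable fU) (hfV : Measurable fV)
    (hUd : Measure.map U μ = volume.withDensity (fun x => ENNReal.ofReal (fU x)))
    (hVd : Measure.map V μ = volume.withDensity (fun x => ENNReal.ofReal (fV x)))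
    (hfU0 : ∀ᵐ x ∂(volume : Measure (Fin N → ℝ)), fU x ≠ 0)
    (hfV0 : ∀ᵐ x ∂(volume : Measure (Fin N → ℝ)), fV x ≠ 0) :
    dTV μ U V
      = ∫ x in Set.Ioc (0:ℝ) 1, (μ {ω | fU (V ω) / fV (V ω) < x}).toReal :=
  stmt0_general μ U V hU hV fU fV hfU hfV hUd hVd
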